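/- arXiv:1706.03276 — 7 statements merged into one kernel-verified Lean document; each statement's English description precedes it below -/
import Mathlib

section
/- Let G be an ordered group, let n ≥ 2 be an integer, and let p, q be positive integers with n = p + q. Then G embeds the poset 1 ⊕ n if and only if G embeds the poset (q+1) ⊕ p. Concretely: there exist elements x, y₀, …, y_{n-1} of G with y₀ < y₁ < … < y_{n-1} and x incomparable to every y_i, if and only if there exist elements x₀ < x₁ < … < x_q and y₀ < y₁ < … < y_{p-1} of G with every x_i incomparable to every y_j. -/
namespace ThrPaper

universe u

variable {X : Type*}

/-- The strict order associated to a reflexive relation `le`. -/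
def Lt (le : X → X → Prop) (x y : X) : Prop := le x y ∧ ¬ le y x

/-- `x` and `y` are incomparable with respect to `le`. -/
def Incomp (le : X → X → Prop) (x y : X) : Prop := ¬ le x y ∧ ¬ le y x

/-- `le` is a partial order (reflexive, transitive, antisymmetric). -/
def IsPartialOrderRel (le : X → X → Prop) : Prop :=
  (∀ x, le x x) ∧ (∀ x y z, le x y → le y z → le x z) ∧ ∀ x y, le x y → le y x → x = y

/-- `le` is total. -/
def IsTotalRel (le : X → X → Prop) : Prop := ∀ x y, le x y ∨ le y x

/-- Compatibility of a relation with the (not necessarily abelian) group operation. -/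
def IsCompat {G : Type*} [AddGroup G] (le : G → G → Prop) : Prop :=
  ∀ a b x y : G, le x y → le (a + x + b) (a + y + b)

/-- The trace quasi-order `≤_pred`: `x ≤_pred y` iff every `z < x` satisfies `z < y`. -/
def PredLe (le : X → X → Prop) (x y : X) : Prop := ∀ z, Lt le z x → Lt le z y

/-- The trace quasi-order `≤_succ`: `x ≤_succ y` iff every `z > y` satisfies `z > x`. -/
def SuccLe (le : X → X → Prop) (x y : X) : Prop := ∀ z, Lt le y z → Lt le x z

/-- `le` is a threshold order: `≤_pred` and `≤_succ` are equal and are total orders. -/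
def IsThresholdOrder (le : X → X → Prop) : Prop :=
  (∀ x y, PredLe le x y ↔ SuccLe le x y) ∧
  (∀ x y, PredLe le x y ∨ PredLe le y x) ∧
  ∀ x y, PredLe le x y → PredLe le y x → x = y

/-- The poset `2 ⊕ 2` embeds into `le`. -/
def Embeds2p2 (le : X → X → Prop) : Prop :=
  ∃ a b c d : X, Lt le a b ∧ Lt le c d ∧
    Incomp le a c ∧ Incomp le a d ∧ Incomp le b c ∧ Incomp le b d

/-- The poset `3 ⊕ 1` embeds into `le`. -/
def Embeds3p1 (le : X → X → Prop) : Prop :=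
  ∃ a b c d : X, Lt le a b ∧ Lt le b c ∧ Incomp le d a ∧ Incomp le d b ∧ Incomp le d c

/-- The poset `1 ⊕ 2` embeds into `le`. -/
def Embeds1p2 (le : X → X → Prop) : Prop :=
  ∃ a b c : X, Lt le a b ∧ Incomp le c a ∧ Incomp le c b

/-!
Both directions are translations. If `x` is incomparable to `y₀ < ⋯ < y_{q+p-1}`, then the first
`q + 1` terms translated by `-y₀` and the last `p` translated by `-x` form two chains with no
comparabilities: `-y₀ + yᵢ ≤ -x + yₖ` would force `x ≤ yₖ`, and `-x + yₖ ≤ -y₀ + yᵢ` (with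
`i ≤ k`) would force `y₀ ≤ x`. Conversely, given incomparable chains `u₀ < ⋯ < u_q` and
`v₀ < ⋯ < v_{p-1}`, the elements `v₀ + (-u_q + uₖ)` for `k < q` form a chain just below `v₀`,
and together with the `vⱼ` they give a chain of length `q + p` incomparable to `u₀`.
-/

theorem _root_.Fin.strictMono_append {α : Type*} [Preorder α] {m n : ℕ} {u : Fin m → α}
    {v : Fin n → α} (hu : StrictMono u) (hv : StrictMono v) (huv : ∀ i j, u i < v j) :
    StrictMono (Fin.append u v) := by
  intro i j hij
  induction i using Fin.addCases with
  | left i =>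
    induction j using Fin.addCases with
    | left j => simpa using hu ((Fin.strictMono_castAdd n).lt_iff_lt.mp hij)
    | right j => simpa using huv i j
  | right i =>
    induction j using Fin.addCases with
    | left j =>
      simp only [Fin.lt_def, Fin.val_natAdd, Fin.val_castAdd] at hij
      omega
    | right j => simpa using hv ((Fin.natAdd_lt_natAdd_iff m).mp hij)

section Preorder

variable {G : Type*} [AddGroup G] [Preorder G] [AddLeftMono G] [AddRightMono G]

theorem incompRel_neg_add_neg_add {a b c x : G} (hab : a ≤ b) (hbc : b ≤ c)
    (hax : ¬ a ≤ x) (hxc : ¬ x ≤ c) : IncompRel (· ≤ ·) (-a + b) (-x + c) := by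
  constructor
  · intro h
    exact hxc (le_neg_add_iff_le.mp ((le_neg_add_iff_le.mpr hab).trans h))
  · intro h
    have : -x + c ≤ -a + c := h.trans (add_le_add_right hbc _)
    exact hax (neg_le_neg_iff.mp ((add_le_add_iff_right c).mp this))

theorem incompRel_add_neg_add {a b c d : G} (hab : a ≤ b) (hbc : b ≤ c)
    (had : ¬ a ≤ d) (hdc : ¬ d ≤ c) : IncompRel (· ≤ ·) a (d + (-c + b)) := by
  constructor
  · intro h
    exact had (h.trans (add_le_of_nonpos_right (neg_add_nonpos_iff.mpr hbc)))
  · intro h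
    have hd : d ≤ a + (-b + c) := by simpa [add_assoc] using add_le_add_left h (-b + c)
    exact hdc (hd.trans (by simpa using add_le_add_left hab (-b + c)))

end Preorder

section PartialOrder

variable {G : Type*} [AddGroup G] [PartialOrder G] [AddLeftMono G] [AddRightMono G]

theorem exists_incompRel_chains_of_incompRel_chain {p q : ℕ} [NeZero p] {x : G}
    {y : Fin (q + p) → G} (hy : StrictMono y) (hxy : ∀ i, IncompRel (· ≤ ·) x (y i)) :
    ∃ (u : Fin (q + 1) → G) (v : Fin p → G), StrictMono u ∧ StrictMono v ∧
      ∀ i j, IncompRel (· ≤ ·) (u i) (v j) := by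
  have hq : q + 1 ≤ q + p := by have := NeZero.pos p; omega
  refine ⟨fun i => -y 0 + y (Fin.castLE hq i), fun j => -x + y (Fin.natAdd q j),
    (hy.comp (Fin.strictMono_castLE hq)).const_add _,
    (hy.comp (Fin.strictMono_natAdd q)).const_add _,
    fun i j => incompRel_neg_add_neg_add (hy.monotone (Fin.zero_le _)) (hy.monotone ?_)
      (hxy 0).2 (hxy _).1⟩
  simp only [Fin.le_def, Fin.val_castLE, Fin.val_natAdd]
  omega

theorem exists_incompRel_chain_of_incompRel_chains {p q : ℕ} [NeZero p] {u : Fin (q + 1) → G}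
    {v : Fin p → G} (hu : StrictMono u) (hv : StrictMono v)
    (huv : ∀ i j, IncompRel (· ≤ ·) (u i) (v j)) :
    ∃ (x : G) (y : Fin (q + p) → G), StrictMono y ∧ ∀ i, IncompRel (· ≤ ·) x (y i) := by
  let w : Fin q → G := fun k => v 0 + (-u (Fin.last q) + u k.castSucc)
  have hw : StrictMono w := ((hu.comp Fin.strictMono_castSucc).const_add _).const_add _
  have hwv : ∀ k j, w k < v j := fun k j =>
    (add_lt_of_neg_right _ (neg_add_neg_iff.mpr (hu (Fin.castSucc_lt_last k)))).trans_le
      (hv.monotone (Fin.zero_le j))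
  refine ⟨u 0, Fin.append w v, Fin.strictMono_append hw hv hwv,
    Fin.addCases (fun k => ?_) (fun j => ?_)⟩
  · rw [Fin.append_left]
    exact incompRel_add_neg_add (hu.monotone (Fin.zero_le _)) (hu.monotone (Fin.le_last _))
      (huv 0 0).1 (huv (Fin.last q) 0).2
  · rw [Fin.append_right]
    exact huv 0 j

theorem exists_incompRel_chain_iff_exists_incompRel_chains (p q : ℕ) [NeZero p] :
    (∃ (x : G) (y : Fin (q + p) → G), StrictMono y ∧ ∀ i, IncompRel (· ≤ ·) x (y i)) ↔
      ∃ (u : Fin (q + 1) → G) (v : Fin p → G), StrictMono u ∧ StrictMono v ∧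
        ∀ i j, IncompRel (· ≤ ·) (u i) (v j) :=
  ⟨fun ⟨_, _, hy, hxy⟩ => exists_incompRel_chains_of_incompRel_chain hy hxy,
    fun ⟨_, _, hu, hv, huv⟩ => exists_incompRel_chain_of_incompRel_chains hu hv huv⟩

end PartialOrder

theorem orderedGroup_embeds_one_plus_n_iff_general {G : Type*} [AddGroup G] (le : G → G → Prop)
    (hpo : IsPartialOrderRel le) (hc : IsCompat le)
    (n p q : ℕ) (hp : 1 ≤ p) (hpq : n = p + q) :
    (∃ (x : G) (y : Fin n → G),
        (∀ i j : Fin n, i < j → Lt le (y i) (y j)) ∧ ∀ i : Fin n, Incomp le x (y i)) ↔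
    (∃ (u : Fin (q + 1) → G) (v : Fin p → G),
        (∀ i j : Fin (q + 1), i < j → Lt le (u i) (u j)) ∧
        (∀ i j : Fin p, i < j → Lt le (v i) (v j)) ∧
        ∀ (i : Fin (q + 1)) (j : Fin p), Incomp le (u i) (v j)) := by
  -- for this order `Lt le` is `<` and `Incomp le` is `IncompRel (· ≤ ·)`, definitionally
  let _ : PartialOrder G :=
    { le := le, le_refl := hpo.1, le_trans := hpo.2.1, le_antisymm := hpo.2.2 }
  have _ : AddLeftMono G := ⟨fun a x y h => show le (a + x) (a + y) by simpa using hc a 0 x y h⟩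
  have _ : AddRightMono G := ⟨fun b x y h => show le (x + b) (y + b) by simpa using hc 0 b x y h⟩
  have _ : NeZero p := ⟨by omega⟩
  obtain rfl : n = q + p := by omega
  exact exists_incompRel_chain_iff_exists_incompRel_chains p q

/-- For an ordered group `G`, `n ≥ 2`, `p, q ≥ 1` with `n = p + q`:
`G` embeds `1 ⊕ n` iff `G` embeds `(q+1) ⊕ p`. -/
theorem orderedGroup_embeds_one_plus_n_iff {G : Type*} [AddGroup G] (le : G → G → Prop)
    (hpo : IsPartialOrderRel le) (hc : IsCompat le)
    (n p q : ℕ) (hn : 2 ≤ n) (hp : 1 ≤ p) (hq : 1 ≤ q) (hpq : n = p + q) :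
    (∃ (x : G) (y : Fin n → G),
        (∀ i j : Fin n, i < j → Lt le (y i) (y j)) ∧ ∀ i : Fin n, Incomp le x (y i)) ↔
    (∃ (u : Fin (q + 1) → G) (v : Fin p → G),
        (∀ i j : Fin (q + 1), i < j → Lt le (u i) (u j)) ∧
        (∀ i j : Fin p, i < j → Lt le (v i) (v j)) ∧
        ∀ (i : Fin (q + 1)) (j : Fin p), Incomp le (u i) (v j)) :=
  orderedGroup_embeds_one_plus_n_iff_general le hpo hc n p q hp hpq

end ThrPaper
end

section
/- The partial order of an ordered group is an interval order if and only if it is a semiorder. That is, for a group G with a compatible partial order ≤: ≤ does not embed 2 ⊕ 2 if and only if ≤ embeds neither 2 ⊕ 2 nor 3 ⊕ 1. -/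
namespace ThrPaper

universe u

variable {X : Type*}

/-!
A `3 ⊕ 1` made of `x < y < z` and `w` yields a `2 ⊕ 2` made of `y < z` and `w < w + t`, where
`t = -x + y > 0`. Right translation by `-t` sends `y` to `x` and `z` to `z - t`, which lies between
`x` and `z`; an element incomparable to both ends of an interval is incomparable to all of it,
so `w + t` is incomparable to `y` and `z` because `w` is incomparable to `x` and `z - t`.
-/

section Poset

variable {X : Type*} {le : X → X → Prop}

theorem Incomp.symm {x y : X} (h : Incomp le x y) : Incomp le y x := ⟨h.2, h.1⟩

theorem Incomp.of_le_of_le (htrans : ∀ x y z, le x y → le y z → le x z) {w a b c : X}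
    (ha : Incomp le w a) (hc : Incomp le w c) (hab : le a b) (hbc : le b c) : Incomp le w b :=
  ⟨fun hwb => hc.1 (htrans _ _ _ hwb hbc), fun hbw => ha.2 (htrans _ _ _ hab hbw)⟩

end Poset

namespace IsCompat

variable {G : Type*} [AddGroup G] {le : G → G → Prop}

theorem add_left (hc : IsCompat le) (a : G) {x y : G} (h : le x y) : le (a + x) (a + y) := by
  simpa using hc a 0 x y h

theorem add_right (hc : IsCompat le) (a : G) {x y : G} (h : le x y) : le (x + a) (y + a) := by
  simpa using hc 0 a x y h

theorem add_left_iff (hc : IsCompat le) (a : G) {x y : G} : le (a + x) (a + y) ↔ le x y :=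
  ⟨fun h => by simpa using hc.add_left (-a) h, hc.add_left a⟩

theorem add_right_iff (hc : IsCompat le) (a : G) {x y : G} : le (x + a) (y + a) ↔ le x y :=
  ⟨fun h => by simpa using hc.add_right (-a) h, hc.add_right a⟩

theorem lt_add_left_iff (hc : IsCompat le) (a : G) {x y : G} :
    Lt le (a + x) (a + y) ↔ Lt le x y := by
  simp only [Lt, hc.add_left_iff]

theorem incomp_add_right_iff (hc : IsCompat le) (a : G) {x y : G} :
    Incomp le (x + a) (y + a) ↔ Incomp le x y := by
  simp only [Incomp, hc.add_right_iff]

theorem embeds2p2_of_embeds3p1 (hc : IsCompat le) (htrans : ∀ x y z, le x y → le y z → le x z)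
    (h : Embeds3p1 le) : Embeds2p2 le := by
  obtain ⟨x, y, z, w, hxy, hyz, hwx, hwy, hwz⟩ := h
  set t := -x + y
  have hyt : y + -t = x := by simp [t]
  have ht : Lt le 0 t := by
    rw [← hc.lt_add_left_iff x]
    simpa [t] using hxy
  have hxz : le x (z + -t) := hyt ▸ hc.add_right (-t) hyz.1
  have hzz : le (z + -t) z := by
    simpa using hc.add_left z (hc.add_right (-t) ht.1)
  have hwz' : Incomp le w (z + -t) := hwx.of_le_of_le htrans hwz hxz hzz
  refine ⟨y, z, w, w + t, hyz, ?_, hwy.symm, ?_, hwz.symm, ?_⟩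
  · simpa using (hc.lt_add_left_iff w).2 ht
  · rw [← hc.incomp_add_right_iff (-t), hyt, add_neg_cancel_right]
    exact hwx.symm
  · rw [← hc.incomp_add_right_iff (-t), add_neg_cancel_right]
    exact hwz'.symm

end IsCompat

/-- The order of an ordered group is an interval order iff it is a semiorder. -/
theorem orderedGroup_intervalOrder_iff_semiorder {G : Type*} [AddGroup G] (le : G → G → Prop)
    (hpo : IsPartialOrderRel le) (hc : IsCompat le) :
    ¬ Embeds2p2 le ↔ (¬ Embeds2p2 le ∧ ¬ Embeds3p1 le) :=
  ⟨fun h22 => ⟨h22, fun h31 => h22 (hc.embeds2p2_of_embeds3p1 hpo.2.1 h31)⟩, And.left⟩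

end ThrPaper
end

section
/- Let (X, +, ≼) be a group equipped with a compatible total order ≼ and let α be a central element of the group with 0 ≼ α. Define x ≤_α y iff x = y or α ≼ y − x, and x ≤_α̌ y iff x = y or α ≺ y − x. Then (X, +, ≤_α) and (X, +, ≤_α̌) are threshold groups: ≤_α and ≤_α̌ are compatible partial orders whose trace quasi-orders ≤_pred and ≤_succ are equal total orders. -/
/-!
Write `x ≤_S y` for `x = y ∨ y - x ∈ S`, so that `≤_α` and `≤_α̌` are `≤_S` for `S = [α, ∞)` and
`S = (α, ∞)`. Such a relation is a partial order once `S` is nonnegative and closed under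
addition, and compatible once `S` is closed under conjugation, which is where the centrality
of `α` enters. Since `S` is an upper set, both trace orders contain `≼`. Conversely, if `y ≺ x`,
an element at distance `α` from `x` or `y` (for `≤_α` with `α = 0`: `y`, resp. `x` itself)
is below `x` but not below `y`, resp. above `y` but not above `x`, so both traces equal `≼`.
-/

namespace ThrPaper

universe u

variable {X : Type*}

/-- A total partial-order relation as a `LinearOrder`; its `<` is definitionally `Lt le`. -/
noncomputable abbrev linearOrderOfRel (le : X → X → Prop) (hpo : IsPartialOrderRel le)
    (htot : IsTotalRel le) : LinearOrder X where
  le := le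
  le_refl := hpo.1
  le_trans := hpo.2.1
  le_antisymm := hpo.2.2
  le_total := htot
  toDecidableLE := Classical.decRel _

theorem isThresholdOrder_of_predLe_iff_of_succLe_iff [LinearOrder X] {le : X → X → Prop}
    (hpred : ∀ x y, PredLe le x y ↔ x ≤ y) (hsucc : ∀ x y, SuccLe le x y ↔ x ≤ y) :
    IsThresholdOrder le :=
  ⟨fun x y => (hpred x y).trans (hsucc x y).symm,
    fun x y => by simpa only [hpred] using le_total x y,
    fun x y hxy hyx => le_antisymm ((hpred x y).1 hxy) ((hpred y x).1 hyx)⟩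

section diffRel

variable {G : Type*} [AddGroup G] {S : Set G}

def diffRel (S : Set G) (x y : G) : Prop := x = y ∨ y - x ∈ S

theorem lt_diffRel_iff {x y : G} : Lt (diffRel S) x y ↔ y - x ∈ S ∧ x - y ∉ S := by
  unfold Lt diffRel
  constructor
  · rintro ⟨rfl | hyx, hxy⟩
    · exact absurd (Or.inl rfl) hxy
    · exact ⟨hyx, fun h => hxy (Or.inr h)⟩
  · rintro ⟨hyx, hxy⟩
    refine ⟨Or.inr hyx, ?_⟩
    rintro (rfl | h)
    exacts [hxy hyx, hxy h]

theorem isCompat_diffRel (hS : ∀ a, ∀ u ∈ S, a + u + -a ∈ S) : IsCompat (diffRel S) := by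
  rintro a b x y (rfl | h)
  · exact Or.inl rfl
  · have hconj : a + y + b - (a + x + b) = a + (y - x) + -a := by
      simp only [sub_eq_add_neg, neg_add_rev, add_assoc, add_neg_cancel_left]
    exact Or.inr (hconj ▸ hS a _ h)

theorem isPartialOrderRel_diffRel [PartialOrder G] [AddLeftMono G]
    (hadd : ∀ u ∈ S, ∀ v ∈ S, u + v ∈ S) (hnonneg : S ⊆ Set.Ici 0) :
    IsPartialOrderRel (diffRel S) := by
  refine ⟨fun x => Or.inl rfl, ?_, ?_⟩
  · rintro x y z (rfl | hxy) (rfl | hyz)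
    exacts [Or.inl rfl, Or.inr hyz, Or.inr hxy,
      Or.inr (sub_add_sub_cancel z y x ▸ hadd _ hyz _ hxy)]
  · rintro x y (rfl | hxy) (hyx | hyx)
    · rfl
    · rfl
    · exact hyx.symm
    · have h₁ : 0 ≤ y - x := hnonneg hxy
      have h₂ : 0 ≤ -(y - x) := neg_sub y x ▸ hnonneg hyx
      exact (sub_eq_zero.1 (le_antisymm (neg_nonneg.1 h₂) h₁)).symm

variable [LinearOrder G] [AddLeftMono G] [AddRightMono G]

theorem predLe_diffRel_of_le (hS : IsUpperSet S) {x y : G} (h : x ≤ y) :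
    PredLe (diffRel S) x y := by
  intro z hz
  rw [lt_diffRel_iff] at hz ⊢
  exact ⟨hS (sub_le_sub_right h z) hz.1, fun hzy => hz.2 (hS (sub_le_sub_left h z) hzy)⟩

theorem succLe_diffRel_of_le (hS : IsUpperSet S) {x y : G} (h : x ≤ y) :
    SuccLe (diffRel S) x y := by
  intro z hz
  rw [lt_diffRel_iff] at hz ⊢
  exact ⟨hS (sub_le_sub_left h z) hz.1, fun hxz => hz.2 (hS (sub_le_sub_right h z) hxz)⟩

theorem isThresholdOrder_diffRel (hS : IsUpperSet S)
    (hpred : ∀ x y, y < x → ∃ z, Lt (diffRel S) z x ∧ ¬ Lt (diffRel S) z y)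
    (hsucc : ∀ x y, y < x → ∃ z, Lt (diffRel S) y z ∧ ¬ Lt (diffRel S) x z) :
    IsThresholdOrder (diffRel S) := by
  refine isThresholdOrder_of_predLe_iff_of_succLe_iff
    (fun x y => ⟨fun hxy => not_lt.1 fun hyx => ?_, predLe_diffRel_of_le hS⟩)
    (fun x y => ⟨fun hxy => not_lt.1 fun hyx => ?_, succLe_diffRel_of_le hS⟩)
  · obtain ⟨z, hzx, hzy⟩ := hpred x y hyx
    exact hzy (hxy z hzx)
  · obtain ⟨z, hyz, hxz⟩ := hsucc x y hyx
    exact hxz (hxy z hyz)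

end diffRel

section threshold

open Set

variable {G : Type*} [AddGroup G] [LinearOrder G] [AddLeftMono G] [AddRightMono G] {α : G}

theorem exists_lt_diffRel_Ici_not_lt (hα : 0 ≤ α) {x y : G} (h : y < x) :
    ∃ z, Lt (diffRel (Ici α)) z x ∧ ¬ Lt (diffRel (Ici α)) z y := by
  simp only [lt_diffRel_iff, mem_Ici, not_le]
  rcases hα.eq_or_lt with rfl | hα
  · exact ⟨y, ⟨sub_nonneg.2 h.le, sub_neg.2 h⟩, fun h' => h'.2.not_ge h'.1⟩
  · have hx : x - (-α + x) = α := by simp [sub_eq_add_neg]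
    have hy : y - (-α + x) = y - x + α := by simp [sub_eq_add_neg, add_assoc]
    refine ⟨-α + x, ⟨hx.ge, by simpa using neg_lt_self hα⟩, ?_⟩
    rw [hy, le_add_iff_nonneg_left]
    exact fun h' => (sub_neg.2 h).not_ge h'.1

theorem exists_gt_diffRel_Ici_not_gt (hα : 0 ≤ α) {x y : G} (h : y < x) :
    ∃ z, Lt (diffRel (Ici α)) y z ∧ ¬ Lt (diffRel (Ici α)) x z := by
  simp only [lt_diffRel_iff, mem_Ici, not_le]
  rcases hα.eq_or_lt with rfl | hα
  · exact ⟨x, ⟨sub_nonneg.2 h.le, sub_neg.2 h⟩, fun h' => h'.2.not_ge h'.1⟩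
  · refine ⟨α + y, ⟨(add_sub_cancel_right α y).ge, ?_⟩, ?_⟩
    · simpa [sub_eq_add_neg] using neg_lt_self hα
    · rw [add_sub_assoc, le_add_iff_nonneg_right]
      exact fun h' => (sub_neg.2 h).not_ge h'.1

theorem exists_lt_diffRel_Ioi_not_lt (hα : 0 ≤ α) {x y : G} (h : y < x) :
    ∃ z, Lt (diffRel (Ioi α)) z x ∧ ¬ Lt (diffRel (Ioi α)) z y := by
  simp only [lt_diffRel_iff, mem_Ioi, not_lt]
  have hx : x - (-α + y) = x - y + α := by simp [sub_eq_add_neg, add_assoc]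
  refine ⟨-α + y, ⟨?_, ?_⟩, by simp [sub_eq_add_neg]⟩
  · rw [hx, lt_add_iff_pos_left]
    exact sub_pos.2 h
  · rw [add_sub_assoc]
    exact (add_nonpos (neg_nonpos.2 hα) (sub_nonpos.2 h.le)).trans hα

theorem exists_gt_diffRel_Ioi_not_gt (hα : 0 ≤ α) {x y : G} (h : y < x) :
    ∃ z, Lt (diffRel (Ioi α)) y z ∧ ¬ Lt (diffRel (Ioi α)) x z := by
  simp only [lt_diffRel_iff, mem_Ioi, not_lt]
  have hy : y - (α + x) = y - x + -α := by simp [sub_eq_add_neg, add_assoc]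
  refine ⟨α + x, ⟨?_, ?_⟩, by simp⟩
  · rw [add_sub_assoc, lt_add_iff_pos_right]
    exact sub_pos.2 h
  · rw [hy]
    exact (add_nonpos (sub_nonpos.2 h.le) (neg_nonpos.2 hα)).trans hα

theorem isThresholdGroup_diffRel_Ici (hc : ∀ g, AddCommute α g) (hα : 0 ≤ α) :
    IsPartialOrderRel (diffRel (Ici α)) ∧ IsCompat (diffRel (Ici α)) ∧
      IsThresholdOrder (diffRel (Ici α)) :=
  ⟨isPartialOrderRel_diffRel (fun _ hu _ hv => le_add_of_le_of_nonneg hu (hα.trans hv))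
      (Ici_subset_Ici.2 hα),
    isCompat_diffRel fun a _ hu =>
      (hc a).symm.add_neg_cancel.symm.trans_le (add_le_add_left (add_le_add_right hu a) (-a)),
    isThresholdOrder_diffRel (isUpperSet_Ici α) (fun _ _ => exists_lt_diffRel_Ici_not_lt hα)
      (fun _ _ => exists_gt_diffRel_Ici_not_gt hα)⟩

theorem isThresholdGroup_diffRel_Ioi (hc : ∀ g, AddCommute α g) (hα : 0 ≤ α) :
    IsPartialOrderRel (diffRel (Ioi α)) ∧ IsCompat (diffRel (Ioi α)) ∧
      IsThresholdOrder (diffRel (Ioi α)) :=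
  ⟨isPartialOrderRel_diffRel (fun _ hu _ hv => lt_add_of_lt_of_nonneg hu (hα.trans hv.le))
      (Ioi_subset_Ici hα),
    isCompat_diffRel fun a _ hu =>
      (hc a).symm.add_neg_cancel.symm.trans_lt (add_lt_add_left (add_lt_add_right hu a) (-a)),
    isThresholdOrder_diffRel (isUpperSet_Ioi α) (fun _ _ => exists_lt_diffRel_Ioi_not_lt hα)
      (fun _ _ => exists_gt_diffRel_Ioi_not_gt hα)⟩

end threshold

/-- If `(X, +, ≼)` is a totally ordered group and `α` a positive central
element, then the orders `≤_α` (`x ≤ y` iff `x = y` or `α ≼ y - x`) and `≤_α̌`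
(`x ≤ y` iff `x = y` or `α ≺ y - x`) make `X` a threshold group. -/
theorem threshold_of_central_threshold {G : Type*} [AddGroup G] (ple : G → G → Prop)
    (hpo : IsPartialOrderRel ple) (htot : IsTotalRel ple) (hc : IsCompat ple)
    (α : G) (hcentral : ∀ g : G, α + g = g + α) (hpos : ple 0 α)
    (lea leb : G → G → Prop)
    (hlea : ∀ x y : G, lea x y ↔ (x = y ∨ ple α (y - x)))
    (hleb : ∀ x y : G, leb x y ↔ (x = y ∨ Lt ple α (y - x))) :
    (IsPartialOrderRel lea ∧ IsCompat lea ∧ IsThresholdOrder lea) ∧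
    (IsPartialOrderRel leb ∧ IsCompat leb ∧ IsThresholdOrder leb) := by
  let := linearOrderOfRel ple hpo htot
  have : AddLeftMono G := ⟨fun a x y h => (by simpa using hc a 0 x y h : ple (a + x) (a + y))⟩
  have : AddRightMono G := ⟨fun b x y h => (by simpa using hc 0 b x y h : ple (x + b) (y + b))⟩
  obtain rfl : lea = diffRel (Set.Ici α) := funext₂ fun x y => propext (hlea x y)
  obtain rfl : leb = diffRel (Set.Ioi α) := funext₂ fun x y => propext (hleb x y)
  exact ⟨isThresholdGroup_diffRel_Ici hcentral hpos, isThresholdGroup_diffRel_Ioi hcentral hpos⟩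

end ThrPaper
end

section
/- For a poset P the following are equivalent: (i) the order of P is a semiorder; (ii) P embeds into an abelian threshold group whose threshold is attained; (iii) P embeds into a threshold group. -/
/-!
In a threshold order the totality of `≤_pred` rules out `2 ⊕ 2` and its agreement with `≤_succ`
rules out `3 ⊕ 1`; both exclusions pass to subposets, so whatever embeds into a threshold group
is a semiorder.

Conversely, in a semiorder the trace `TraceLE` (both `≤_pred` and `≤_succ`) is a total preorder.
Adding the elements of a finite semiorder in increasing trace order, each new value chosen above
all previous ones, yields a Scott–Suppes representation `q : X → ℚ`: `x < y ↔ q x + 1 < q y`, and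
`|q x - q y| < 1` for incomparable `x, y`. Gluing the representations of all finite subsets along
an ultrafilter gives one on the whole semiorder, with values in an ultrapower of `ℚ`; and in any
linearly ordered abelian group `g ≺ h ↔ g + 1 ≤ h` is a threshold order with attained threshold.
-/

namespace ThrPaper

universe u

variable {X : Type*}

/-- An ordered group whose order is a threshold order. -/
def IsThresholdGroup (G : Type*) [AddGroup G] (le : G → G → Prop) : Prop :=
  IsPartialOrderRel le ∧ IsCompat le ∧ IsThresholdOrder le

/-- The threshold is attained: the set of strictly positive elements has a least
element with respect to `≤_pred`. -/
def HasAttainedThreshold (G : Type*) [AddGroup G] (le : G → G → Prop) : Prop :=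
  ∃ m : G, Lt le 0 m ∧ ∀ x : G, Lt le 0 x → PredLe le m x


section ThresholdOrder

variable {Y : Type*} {le : X → X → Prop} {le' : Y → Y → Prop} {f : X → Y}

theorem Embeds2p2.map (hf : ∀ a b, le a b ↔ le' (f a) (f b)) (h : Embeds2p2 le) :
    Embeds2p2 le' := by
  obtain ⟨a, b, c, d, h⟩ := h
  exact ⟨f a, f b, f c, f d, by simpa only [Lt, Incomp, hf] using h⟩

theorem Embeds3p1.map (hf : ∀ a b, le a b ↔ le' (f a) (f b)) (h : Embeds3p1 le) :
    Embeds3p1 le' := by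
  obtain ⟨a, b, c, d, h⟩ := h
  exact ⟨f a, f b, f c, f d, by simpa only [Lt, Incomp, hf] using h⟩

theorem IsThresholdOrder.not_embeds2p2 (h : IsThresholdOrder le) : ¬ Embeds2p2 le := by
  rintro ⟨a, b, c, d, hab, hcd, -, had, hbc, -⟩
  rcases h.2.1 b d with hbd | hdb
  · exact had.1 (hbd a hab).1
  · exact hbc.2 (hdb c hcd).1

theorem IsThresholdOrder.not_embeds3p1 (h : IsThresholdOrder le) : ¬ Embeds3p1 le := by
  rintro ⟨a, b, c, d, hab, hbc, hda, -, hdc⟩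
  rcases h.2.1 b d with hbd | hdb
  · exact hda.2 (hbd a hab).1
  · exact hdc.1 ((h.1 d b).1 hdb c hbc).1

end ThresholdOrder

section ThresholdRel

variable {G : Type*} [AddCommGroup G] [LinearOrder G] [IsOrderedAddMonoid G] {m g h : G}

def thresholdRel (m g h : G) : Prop := g = h ∨ g + m ≤ h

theorem lt_thresholdRel_iff (hm : 0 < m) : Lt (thresholdRel m) g h ↔ g + m ≤ h := by
  refine ⟨fun ⟨hgh, hhg⟩ => hgh.resolve_left fun e => hhg (Or.inl e.symm),
    fun hgh => ⟨Or.inr hgh, ?_⟩⟩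
  rintro (rfl | hhg)
  · exact (lt_add_of_pos_right _ hm).not_ge hgh
  · exact lt_irrefl g <|
      (lt_add_of_pos_right g hm).trans_le (hgh.trans ((le_add_of_nonneg_right hm.le).trans hhg))

theorem predLe_thresholdRel_iff (hm : 0 < m) : PredLe (thresholdRel m) g h ↔ g ≤ h := by
  refine ⟨fun H => ?_, fun hgh z hz => ?_⟩
  · simpa using (lt_thresholdRel_iff hm).1 (H (g - m) ((lt_thresholdRel_iff hm).2 (by simp)))
  · rw [lt_thresholdRel_iff hm] at hz ⊢
    exact hz.trans hgh

theorem succLe_thresholdRel_iff (hm : 0 < m) : SuccLe (thresholdRel m) g h ↔ g ≤ h := by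
  refine ⟨fun H => ?_, fun hgh z hz => ?_⟩
  · simpa using (lt_thresholdRel_iff hm).1 (H (h + m) ((lt_thresholdRel_iff hm).2 le_rfl))
  · rw [lt_thresholdRel_iff hm] at hz ⊢
    exact le_trans (by gcongr) hz

theorem isThresholdGroup_thresholdRel (hm : 0 < m) : IsThresholdGroup G (thresholdRel m) := by
  refine ⟨⟨fun g => Or.inl rfl, ?_, ?_⟩, ?_, ?_, ?_, ?_⟩
  · rintro g h k (rfl | hgh) (rfl | hhk)
    · exact Or.inl rfl
    · exact Or.inr hhk
    · exact Or.inr hgh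
    · exact Or.inr (hgh.trans ((le_add_of_nonneg_right hm.le).trans hhk))
  · rintro g h (rfl | hgh) hhg
    · rfl
    · exact absurd hhg ((lt_thresholdRel_iff hm).2 hgh).2
  · rintro a b x y (rfl | hxy)
    · exact Or.inl rfl
    · right
      calc a + x + b + m = a + (x + m) + b := by abel
        _ ≤ a + y + b := by gcongr
  · intro x y
    rw [predLe_thresholdRel_iff hm, succLe_thresholdRel_iff hm]
  · intro x y
    simp only [predLe_thresholdRel_iff hm]
    exact le_total x y
  · intro x y hxy hyx
    exact le_antisymm ((predLe_thresholdRel_iff hm).1 hxy) ((predLe_thresholdRel_iff hm).1 hyx)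

theorem hasAttainedThreshold_thresholdRel (hm : 0 < m) :
    HasAttainedThreshold G (thresholdRel m) :=
  ⟨m, (lt_thresholdRel_iff hm).2 (zero_add m).le, fun x hx =>
    (predLe_thresholdRel_iff hm).2 (by simpa using (lt_thresholdRel_iff hm).1 hx)⟩

end ThresholdRel

abbrev IsPartialOrderRel.toPartialOrder {le : X → X → Prop} (hpo : IsPartialOrderRel le) :
    PartialOrder X where
  le := le
  le_refl := hpo.1
  le_trans := hpo.2.1
  le_antisymm := hpo.2.2

section Semiorder

variable {α : Type*} [PartialOrder α] {a b c d x : α}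

structure IsSemiorder (α : Type*) [PartialOrder α] : Prop where
  not_embeds2p2 : ¬ Embeds2p2 (· ≤ · : α → α → Prop)
  not_embeds3p1 : ¬ Embeds3p1 (· ≤ · : α → α → Prop)

theorem IsSemiorder.lt_or_lt_of_lt_of_lt (hs : IsSemiorder α) (hab : a < b) (hcd : c < d) :
    a < d ∨ c < b := by
  by_contra! h
  obtain ⟨had, hcb⟩ := h
  exact hs.not_embeds2p2 ⟨a, b, c, d, ⟨hab.le, hab.not_ge⟩, ⟨hcd.le, hcd.not_ge⟩,
    ⟨by order, by order⟩, ⟨by order, by order⟩, ⟨by order, by order⟩,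
    ⟨by order, by order⟩⟩

theorem IsSemiorder.lt_or_lt_of_chain (hs : IsSemiorder α) (hab : a < b) (hbc : b < c) (d : α) :
    a < d ∨ d < c := by
  by_contra! h
  obtain ⟨had, hdc⟩ := h
  exact hs.not_embeds3p1 ⟨a, b, c, d, ⟨hab.le, hab.not_ge⟩, ⟨hbc.le, hbc.not_ge⟩,
    ⟨by order, by order⟩, ⟨by order, by order⟩, ⟨by order, by order⟩⟩

def TraceLE (a b : α) : Prop := (∀ z, z < a → z < b) ∧ ∀ z, b < z → a < z

theorem TraceLE.refl (a : α) : TraceLE a a := ⟨fun _ => id, fun _ => id⟩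

theorem TraceLE.trans (hab : TraceLE a b) (hbc : TraceLE b c) : TraceLE a c :=
  ⟨fun z hz => hbc.1 z (hab.1 z hz), fun z hz => hab.2 z (hbc.2 z hz)⟩

theorem TraceLE.not_lt (hab : TraceLE a b) : ¬ b < a := fun hba => lt_irrefl a (hab.2 a hba)

theorem IsSemiorder.traceLE_total (hs : IsSemiorder α) (a b : α) :
    TraceLE a b ∨ TraceLE b a := by
  refine or_iff_not_imp_left.2 fun hab => ?_
  rw [TraceLE, not_and_or] at hab
  push Not at hab
  rcases hab with ⟨z, hza, hzb⟩ | ⟨z, hbz, haz⟩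
  · exact ⟨fun c hcb => (hs.lt_or_lt_of_lt_of_lt hcb hza).resolve_right hzb,
      fun w haw => (hs.lt_or_lt_of_chain hza haw b).resolve_left hzb⟩
  · exact ⟨fun c hcb => (hs.lt_or_lt_of_chain hcb hbz a).resolve_right haz,
      fun w haw => (hs.lt_or_lt_of_lt_of_lt hbz haw).resolve_right haz⟩

theorem IsSemiorder.exists_forall_traceLE (hs : IsSemiorder α) {S : Finset α} (hS : S.Nonempty) :
    ∃ x ∈ S, ∀ y ∈ S, TraceLE y x := by
  induction hS using Finset.Nonempty.cons_induction with
  | singleton a => exact ⟨a, Finset.mem_singleton_self a, by simpa using TraceLE.refl a⟩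
  | cons a S ha hS ih =>
    obtain ⟨x, hx, hmax⟩ := ih
    rcases hs.traceLE_total a x with hax | hxa
    · exact ⟨x, Finset.mem_cons_of_mem hx, (Finset.forall_mem_cons _ _).2 ⟨hax, hmax⟩⟩
    · exact ⟨a, Finset.mem_cons_self a S,
        (Finset.forall_mem_cons _ _).2 ⟨TraceLE.refl a, fun y hy => (hmax y hy).trans hxa⟩⟩

structure IsScottSuppesRepOn {G : Type*} [Add G] [LT G] (m : G) (S : Set α) (q : α → G) :
    Prop where
  injOn : Set.InjOn q S
  add_lt_of_lt : ∀ a ∈ S, ∀ b ∈ S, a < b → q a + m < q b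
  lt_add_of_incompRel : ∀ a ∈ S, ∀ b ∈ S, IncompRel (· ≤ ·) a b → q b < q a + m

theorem exists_value_insert {T : Finset α} {q : α → ℚ}
    (hmax : ∀ y ∈ T, TraceLE y x) (hq : IsScottSuppesRepOn 1 ↑T q)
    (hmono : ∀ a ∈ T, ∀ b ∈ T, ¬ TraceLE b a → q a < q b) :
    ∃ v : ℚ, (∀ s ∈ T, q s < v) ∧ (∀ s ∈ T, s < x → q s + 1 < v) ∧
      ∀ t ∈ T, IncompRel (· ≤ ·) t x → v < q t + 1 := by
  classical
  have hbounds : ∀ l ∈ T.image q ∪ {s ∈ T | s < x}.image (q · + 1),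
      ∀ u ∈ {t ∈ T | IncompRel (· ≤ ·) t x}.image (q · + 1), l < u := by
    simp only [Finset.mem_union, Finset.mem_image, Finset.mem_filter]
    rintro _ (⟨s, hs, rfl⟩ | ⟨s, ⟨hs, hsx⟩, rfl⟩) _ ⟨t, ⟨ht, htx⟩, rfl⟩
    · rcases lt_or_eq_or_gt_or_incompRel s t with hst | rfl | hts | hst
      · linarith [hq.add_lt_of_lt s hs t ht hst]
      · exact lt_add_one (q s)
      · exact absurd ((hmax s hs).1 t hts).le htx.1
      · exact hq.lt_add_of_incompRel t ht s hs hst.symm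
    · have hts : ¬ TraceLE t s := fun hts => htx.1 (hts.2 x hsx).le
      linarith [hmono s hs t ht hts]
  obtain ⟨v, hlow, hup⟩ := Finset.exists_between' _ _ hbounds
  exact ⟨v, fun s hs => hlow _ (Finset.mem_union_left _ (Finset.mem_image_of_mem q hs)),
    fun s hs hsx => hlow _ (Finset.mem_union_right _
      (Finset.mem_image_of_mem _ (Finset.mem_filter.2 ⟨hs, hsx⟩))),
    fun t ht htx => hup _ (Finset.mem_image_of_mem _ (Finset.mem_filter.2 ⟨ht, htx⟩))⟩

theorem exists_scottSuppesRepOn_insert [DecidableEq α] {T : Finset α}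
    {q : α → ℚ} (hx : x ∉ T) (hmax : ∀ y ∈ T, TraceLE y x)
    (hq : IsScottSuppesRepOn 1 ↑T q)
    (hmono : ∀ a ∈ T, ∀ b ∈ T, ¬ TraceLE b a → q a < q b) :
    ∃ q' : α → ℚ, IsScottSuppesRepOn 1 ↑(insert x T) q' ∧
      ∀ a ∈ insert x T, ∀ b ∈ insert x T, ¬ TraceLE b a → q' a < q' b := by
  obtain ⟨v, hv, hv_lt, hv_incomp⟩ := exists_value_insert hmax hq hmono
  set q' := Function.update q x v
  have hq'x : q' x = v := Function.update_self ..
  have hq'T : ∀ a ∈ T, q' a = q a := fun a ha =>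
    Function.update_of_ne (ne_of_mem_of_not_mem ha hx) ..
  refine ⟨q', ⟨?_, ?_, ?_⟩, ?_⟩
  · rw [Finset.coe_insert, Set.injOn_insert (by simpa using hx)]
    refine ⟨hq.injOn.congr fun a ha => (hq'T a ha).symm, ?_⟩
    rintro ⟨a, ha, hax⟩
    rw [hq'T a ha, hq'x] at hax
    exact (hv a ha).ne hax
  · simp only [Finset.coe_insert, Set.forall_mem_insert, Finset.mem_coe]
    refine ⟨⟨fun h => absurd h (lt_irrefl x), fun b hb hxb => absurd hxb (hmax b hb).not_lt⟩,
      fun a ha => ⟨fun hax => ?_, fun b hb hab => ?_⟩⟩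
    · rw [hq'x, hq'T a ha]
      exact hv_lt a ha hax
    · rw [hq'T a ha, hq'T b hb]
      exact hq.add_lt_of_lt a ha b hb hab
  · simp only [Finset.coe_insert, Set.forall_mem_insert, Finset.mem_coe]
    refine ⟨⟨fun h => absurd le_rfl h.1, fun b hb _ => ?_⟩,
      fun a ha => ⟨fun hax => ?_, fun b hb hab => ?_⟩⟩
    · rw [hq'x, hq'T b hb]
      exact (hv b hb).trans (lt_add_one v)
    · rw [hq'x, hq'T a ha]
      exact hv_incomp a ha hax
    · rw [hq'T a ha, hq'T b hb]
      exact hq.lt_add_of_incompRel a ha b hb hab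
  · simp only [Finset.forall_mem_insert]
    refine ⟨⟨fun h => absurd (TraceLE.refl x) h, fun b hb h => absurd (hmax b hb) h⟩,
      fun a ha => ⟨fun _ => ?_, fun b hb hab => ?_⟩⟩
    · rw [hq'x, hq'T a ha]
      exact hv a ha
    · rw [hq'T a ha, hq'T b hb]
      exact hmono a ha b hb hab

theorem IsSemiorder.exists_scottSuppesRepOn_finset (hs : IsSemiorder α) (S : Finset α) :
    ∃ q : α → ℚ, IsScottSuppesRepOn 1 ↑S q ∧
      ∀ a ∈ S, ∀ b ∈ S, ¬ TraceLE b a → q a < q b := by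
  classical
  induction S using Finset.strongInduction with
  | H S ih =>
    rcases S.eq_empty_or_nonempty with rfl | hS
    · exact ⟨0, ⟨by simp, by simp, by simp⟩, by simp⟩
    obtain ⟨x, hx, hmax⟩ := hs.exists_forall_traceLE hS
    obtain ⟨q, hq, hmono⟩ := ih _ (Finset.erase_ssubset hx)
    rw [← Finset.insert_erase hx]
    exact exists_scottSuppesRepOn_insert (Finset.notMem_erase x S)
      (fun y hy => hmax y (Finset.mem_of_mem_erase hy)) hq hmono

theorem exists_scottSuppesRepOn_univ
    (h : ∀ S : Finset α, ∃ q : α → ℚ, IsScottSuppesRepOn 1 ↑S q) :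
    ∃ F : α → (Ultrafilter.of (Filter.atTop : Filter (Finset α)) :
        Filter (Finset α)).Germ ℚ,
      IsScottSuppesRepOn 1 Set.univ F := by
  classical
  set U := Ultrafilter.of (Filter.atTop : Filter (Finset α))
  choose q hq using h
  have hmem (a b : α) : ∀ᶠ S in (U : Filter (Finset α)), a ∈ S ∧ b ∈ S :=
    ((Filter.eventually_ge_atTop {a, b}).filter_mono (Ultrafilter.of_le _)).mono fun S hS => by
      simpa [Finset.insert_subset_iff] using hS
  refine ⟨fun a => ↑(fun S => q S a), fun a _ b _ hab => ?_, fun a _ b _ hab => ?_,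
    fun a _ b _ hab => ?_⟩
  · obtain ⟨S, ⟨ha, hb⟩, hS⟩ := ((hmem a b).and (Filter.Germ.coe_eq.1 hab)).exists
    exact (hq S).injOn ha hb hS
  · exact Filter.Germ.coe_lt.2
      ((hmem a b).mono fun S ⟨ha, hb⟩ => (hq S).add_lt_of_lt a ha b hb hab)
  · exact Filter.Germ.coe_lt.2
      ((hmem a b).mono fun S ⟨ha, hb⟩ => (hq S).lt_add_of_incompRel a ha b hb hab)

theorem IsScottSuppesRepOn.le_iff_thresholdRel {G : Type*} [AddCommGroup G] [LinearOrder G]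
    [IsOrderedAddMonoid G] {m : G} {q : α → G} (hm : 0 ≤ m)
    (hq : IsScottSuppesRepOn m Set.univ q)
    (a b : α) : a ≤ b ↔ thresholdRel m (q a) (q b) := by
  refine ⟨fun hab => ?_, ?_⟩
  · rcases hab.eq_or_lt with rfl | hab
    · exact Or.inl rfl
    · exact Or.inr (hq.add_lt_of_lt a trivial b trivial hab).le
  rintro (hqab | hqab)
  · exact (hq.injOn trivial trivial hqab).le
  rcases lt_or_eq_or_gt_or_incompRel a b with hab | rfl | hba | hab
  · exact hab.le
  · exact le_rfl
  · exact absurd ((hq.add_lt_of_lt b trivial a trivial hba).trans_le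
      ((le_add_of_nonneg_right hm).trans hqab)) (le_add_of_nonneg_right hm).not_gt
  · exact absurd hqab (hq.lt_add_of_incompRel a trivial b trivial hab).not_ge

theorem IsSemiorder.exists_embedding_thresholdGroup {α : Type u} [PartialOrder α]
    (hs : IsSemiorder α) :
    ∃ (G : Type u) (inst : AddCommGroup G) (le' : G → G → Prop),
      @IsThresholdGroup G inst.toAddGroup le' ∧ @HasAttainedThreshold G inst.toAddGroup le' ∧
      ∃ f : α → G, Function.Injective f ∧ ∀ a b : α, a ≤ b ↔ le' (f a) (f b) := by
  obtain ⟨F, hF⟩ := exists_scottSuppesRepOn_univ fun S =>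
    (hs.exists_scottSuppesRepOn_finset S).imp fun _ => And.left
  exact ⟨_, inferInstance, thresholdRel 1, isThresholdGroup_thresholdRel one_pos,
    hasAttainedThreshold_thresholdRel one_pos, F, Set.injOn_univ.1 hF.injOn,
    hF.le_iff_thresholdRel zero_le_one⟩

end Semiorder

/-- For a poset `(X, le)` the following are equivalent:
(i) `le` is a semiorder; (ii) it embeds into an abelian threshold group with attained
threshold; (iii) it embeds into a threshold group. -/
theorem semiorder_iff_embeds_thresholdGroup {X : Type u} (le : X → X → Prop)
    (hpo : IsPartialOrderRel le) :
    ((¬ Embeds2p2 le ∧ ¬ Embeds3p1 le) ↔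
      (∃ (G : Type u) (inst : AddCommGroup G) (le' : G → G → Prop),
        @IsThresholdGroup G inst.toAddGroup le' ∧
        @HasAttainedThreshold G inst.toAddGroup le' ∧
        ∃ f : X → G, Function.Injective f ∧ ∀ a b : X, le a b ↔ le' (f a) (f b))) ∧
    ((¬ Embeds2p2 le ∧ ¬ Embeds3p1 le) ↔
      (∃ (G : Type u) (inst : AddGroup G) (le' : G → G → Prop),
        @IsThresholdGroup G inst le' ∧
        ∃ f : X → G, Function.Injective f ∧ ∀ a b : X, le a b ↔ le' (f a) (f b))) := by
  let _ : PartialOrder X := hpo.toPartialOrder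
  have embeds (h : ¬ Embeds2p2 le ∧ ¬ Embeds3p1 le) :=
    IsSemiorder.exists_embedding_thresholdGroup (α := X) ⟨h.1, h.2⟩
  have semiorder (G : Type u) (inst : AddGroup G) (le' : G → G → Prop)
      (hG : @IsThresholdGroup G inst le')
      (hf : ∃ f : X → G, Function.Injective f ∧ ∀ a b : X, le a b ↔ le' (f a) (f b)) :
      ¬ Embeds2p2 le ∧ ¬ Embeds3p1 le := by
    obtain ⟨f, -, hf⟩ := hf
    exact ⟨fun h => hG.2.2.not_embeds2p2 (h.map hf), fun h => hG.2.2.not_embeds3p1 (h.map hf)⟩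
  refine ⟨⟨embeds, fun ⟨G, inst, le', hG, _, hf⟩ => semiorder G _ le' hG hf⟩,
    ⟨fun h => ?_, fun ⟨G, inst, le', hG, hf⟩ => semiorder G inst le' hG hf⟩⟩
  obtain ⟨G, inst, le', hG, -, hf⟩ := embeds h
  exact ⟨G, _, le', hG, hf⟩

end ThrPaper
end

section
/- Let G be a nontrivial finitely generated group equipped with a compatible total order ≼. Then there exists a nonempty normal final segment F of (G, ≼) with 0 ∉ F, contained in the set of strictly positive elements, such that I := G \ (−F ∪ F) is not a subgroup of G. -/
namespace ThrPaper

universe u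

variable {X : Type*}

/-!
Let `g` dominate the generators and their negatives, so that every element lies below some
`n • g`, and let `F` be the set of elements all of whose conjugates exceed `g`. It is a normal
final segment of positive elements missing `g` and `-g`, so both lie in `I`. But `g + g ∈ F`:
if `-u + (g + g) + u ≤ g`, then conjugating `k` times by `u` gives
`2 ^ k • g ≤ k • u + g - k • u ≤ (k * c + 1) • g` for a constant `c`, which fails for large `k`.
-/

noncomputable abbrev IsPartialOrderRel.toLinearOrder {le : X → X → Prop}
    (hpo : IsPartialOrderRel le) (htot : IsTotalRel le) : LinearOrder X where
  le := le
  le_refl := hpo.1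
  le_trans := hpo.2.1
  le_antisymm := hpo.2.2
  le_total := htot
  toDecidableLE := Classical.decRel _

theorem exists_mul_add_one_lt_two_pow (m : ℕ) : ∃ k : ℕ, k * m + 1 < 2 ^ k := by
  refine ⟨2 * m + 2, ?_⟩
  have hm : m + 1 ≤ 2 ^ m := Nat.lt_two_pow_self
  have hpow : 2 ^ (2 * m + 2) = 4 * 2 ^ m * 2 ^ m := by ring
  rw [hpow]
  nlinarith

section OrderedGroup

variable {G : Type*} [AddGroup G] [LinearOrder G]

theorem exists_forall_le_nsmul [AddLeftMono G] [AddRightMono G] [AddGroup.FG G] :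
    ∃ g : G, ∀ x, ∃ n : ℕ, x ≤ n • g := by
  obtain ⟨S, hS⟩ := AddGroup.FG.out (H := G)
  obtain ⟨g, hg⟩ := (S.image abs).exists_le
  have hSg : ∀ s ∈ S, s ≤ g ∧ -s ≤ g := fun s hs =>
    have hsg := hg _ (Finset.mem_image_of_mem _ hs)
    ⟨(le_abs_self s).trans hsg, (neg_le_abs s).trans hsg⟩
  suffices h : ∀ x ∈ AddSubgroup.closure (S : Set G), ∃ n : ℕ, x ≤ n • g ∧ -x ≤ n • g from
    ⟨g, fun x => (h x (hS ▸ AddSubgroup.mem_top x)).imp fun _ => And.left⟩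
  intro x hx
  induction hx using AddSubgroup.closure_induction with
  | mem s hs => exact ⟨1, by simpa using hSg s hs⟩
  | zero => exact ⟨0, by simp⟩
  | add x y _ _ ihx ihy =>
    obtain ⟨n, hxn, hxn'⟩ := ihx
    obtain ⟨m, hym, hym'⟩ := ihy
    refine ⟨n + m, ?_, ?_⟩
    · rw [add_nsmul]
      exact add_le_add hxn hym
    · rw [neg_add_rev, add_comm n, add_nsmul]
      exact add_le_add hym' hxn'
  | neg x _ ih =>
    obtain ⟨n, hxn, hxn'⟩ := ih
    exact ⟨n, hxn', by rwa [neg_neg]⟩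

theorem pos_of_forall_le_nsmul [AddLeftMono G] {g x : G} (hcof : ∀ x, ∃ n : ℕ, x ≤ n • g)
    (hx : x ≠ 0) : 0 < g := by
  by_contra! hg
  obtain ⟨n, hxn⟩ := hcof x
  obtain ⟨m, hxm⟩ := hcof (-x)
  have hx_nonpos : x ≤ 0 := hxn.trans (nsmul_nonpos hg n)
  have hx_nonneg : 0 ≤ x := neg_nonpos.mp (hxm.trans (nsmul_nonpos hg m))
  exact hx (le_antisymm hx_nonpos hx_nonneg)

theorem two_pow_nsmul_le_conj [AddLeftMono G] [AddRightMono G] {g u : G}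
    (h : g + g ≤ u + g + -u) (k : ℕ) : 2 ^ k • g ≤ k • u + g + -(k • u) := by
  induction k with
  | zero => simp
  | succ k ih =>
    calc 2 ^ (k + 1) • g = 2 ^ k • g + 2 ^ k • g := by rw [pow_succ, mul_two, add_nsmul]
      _ ≤ (k • u + g + -(k • u)) + (k • u + g + -(k • u)) := add_le_add ih ih
      _ = k • u + (g + g) + -(k • u) := by simp only [add_assoc, neg_add_cancel_left]
      _ ≤ k • u + (u + g + -u) + -(k • u) := by gcongr
      _ = (k + 1) • u + g + -((k + 1) • u) := by
        simp only [succ_nsmul, neg_add_rev, add_assoc]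

theorem conj_le_nsmul [AddLeftMono G] [AddRightMono G] {g u : G} {m n : ℕ} (hu : u ≤ m • g)
    (hu' : -u ≤ n • g) (k : ℕ) : k • u + g + -(k • u) ≤ (k * (m + n) + 1) • g := by
  calc k • u + g + -(k • u) = k • u + g + k • -u := by rw [neg_nsmul]
    _ ≤ k • m • g + g + k • n • g := by gcongr
    _ = (k * (m + n) + 1) • g := by
      rw [← mul_nsmul', ← mul_nsmul', mul_add, add_right_comm, add_nsmul, add_nsmul, one_nsmul]

def conjAbove (g : G) : Set G := {x | ∀ u, g < -u + x + u}

theorem conjAbove_isUpperSet [AddLeftMono G] [AddRightMono G] (g : G) : IsUpperSet (conjAbove g) :=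
  fun _ _ hxy hx u => (hx u).trans_le (by gcongr)

theorem neg_add_add_mem_conjAbove {g x : G} (hx : x ∈ conjAbove g) (u : G) :
    -u + x + u ∈ conjAbove g := fun v => by
  simpa only [neg_add_rev, add_assoc] using hx (u + v)

theorem lt_of_mem_conjAbove {g x : G} (hx : x ∈ conjAbove g) : g < x := by
  simpa using hx 0

theorem add_self_mem_conjAbove [AddLeftMono G] [AddRightMono G] {g : G} (hg : 0 < g)
    (hcof : ∀ x, ∃ n : ℕ, x ≤ n • g) : g + g ∈ conjAbove g := by
  intro u
  by_contra! h
  have hconj : g + g ≤ u + g + -u := by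
    calc g + g = u + (-u + (g + g) + u) + -u := by
          simp only [add_assoc, add_neg_cancel_left, add_neg_cancel, add_zero]
      _ ≤ u + g + -u := by gcongr
  obtain ⟨m, hu⟩ := hcof u
  obtain ⟨n, hu'⟩ := hcof (-u)
  obtain ⟨k, hk⟩ := exists_mul_add_one_lt_two_pow (m + n)
  have hle := (two_pow_nsmul_le_conj hconj k).trans (conj_le_nsmul hu hu' k)
  exact hk.not_ge ((nsmul_le_nsmul_iff_left hg).mp hle)

end OrderedGroup

/-- Every nontrivial finitely generated totally ordered group admits a
nonempty normal final segment `F` of strictly positive elements with `0 ∉ F` such that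
`I := G \ (-F ∪ F)` is not a subgroup. -/
theorem finitelyGenerated_finalSegment_not_subgroup (G : Type*) [AddGroup G]
    (hfg : AddGroup.FG G) (hnt : ∃ x : G, x ≠ 0)
    (ple : G → G → Prop)
    (hpo : IsPartialOrderRel ple) (htot : IsTotalRel ple) (hc : IsCompat ple) :
    ∃ F : Set G,
      F.Nonempty ∧
      (∀ x ∈ F, ∀ y, ple x y → y ∈ F) ∧
      (∀ x ∈ F, ∀ u : G, -u + x + u ∈ F) ∧
      (0 : G) ∉ F ∧
      (∀ x ∈ F, Lt ple 0 x) ∧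
      ¬ ((0 : G) ∈ {x : G | -x ∉ F ∧ x ∉ F} ∧
         (∀ x ∈ {x : G | -x ∉ F ∧ x ∉ F}, -x ∈ {x : G | -x ∉ F ∧ x ∉ F}) ∧
         ∀ x ∈ {x : G | -x ∉ F ∧ x ∉ F}, ∀ y ∈ {x : G | -x ∉ F ∧ x ∉ F},
           x + y ∈ {x : G | -x ∉ F ∧ x ∉ F}) := by
  let : LinearOrder G := hpo.toLinearOrder htot
  have : AddLeftMono G := ⟨fun a _ _ h => show ple _ _ by simpa using hc a 0 _ _ h⟩
  have : AddRightMono G := ⟨fun b _ _ h => show ple _ _ by simpa using hc 0 b _ _ h⟩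
  have := hfg
  obtain ⟨g, hcof⟩ := exists_forall_le_nsmul (G := G)
  obtain ⟨x₀, hx₀⟩ := hnt
  have hg : 0 < g := pos_of_forall_le_nsmul hcof hx₀
  have hgg : g + g ∈ conjAbove g := add_self_mem_conjAbove hg hcof
  have hgI : -g ∉ conjAbove g ∧ g ∉ conjAbove g :=
    ⟨fun h => (lt_of_mem_conjAbove h).not_ge ((neg_nonpos.mpr hg.le).trans hg.le),
      fun h => (lt_of_mem_conjAbove h).false⟩
  refine ⟨conjAbove g, ⟨g + g, hgg⟩, fun x hx y hxy => conjAbove_isUpperSet g hxy hx,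
    fun x hx u => neg_add_add_mem_conjAbove hx u,
    fun h => (hg.trans (lt_of_mem_conjAbove h)).false,
    fun x hx => hg.trans (lt_of_mem_conjAbove hx), ?_⟩
  rintro ⟨-, -, hadd⟩
  exact (hadd g hgI g hgI).2 hgg

end ThrPaper
end

section
/- Let S be a nonempty finite set. The free group on S can be equipped with a compatible partial order which is a semiorder but not a weak order. -/
namespace ThrPaper

universe u

variable {X : Type*}

/-! Let `ℓ : F(S) → ℤ` be the exponent-sum homomorphism sending every generator to `1`, and put
`x < y` iff `ℓ x + 2 ≤ ℓ y`. Because `ℓ` is a homomorphism this order is compatible, and because it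
compares numerical values against a fixed threshold (a Scott–Suppes representation) it contains
neither `2 ⊕ 2` nor `3 ⊕ 1`. It is not a weak order: for a generator `s`, the element `s` is
incomparable to both `1 < s ^ 2`. -/

section MarginLe

variable {α : Type*} [AddCommMonoid α] [LinearOrder α]

def marginLe (f : X → α) (δ : α) (x y : X) : Prop := x = y ∨ f x + δ ≤ f y

variable {f : X → α} {δ : α}

theorem incomp_marginLe_iff {x y : X} :
    Incomp (marginLe f δ) x y ↔ x ≠ y ∧ f y < f x + δ ∧ f x < f y + δ := by
  simp only [Incomp, marginLe, not_or, not_le]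
  exact ⟨fun ⟨⟨hxy, h₁⟩, _, h₂⟩ => ⟨hxy, h₁, h₂⟩,
    fun ⟨hxy, h₁, h₂⟩ => ⟨⟨hxy, h₁⟩, Ne.symm hxy, h₂⟩⟩

variable [IsOrderedCancelAddMonoid α]

theorem lt_marginLe_iff (hδ : 0 < δ) {x y : X} : Lt (marginLe f δ) x y ↔ f x + δ ≤ f y := by
  have gap : ∀ x y, f x + δ ≤ f y → f x < f y := fun x y h =>
    (lt_add_of_pos_right _ hδ).trans_le h
  constructor
  · rintro ⟨rfl | hxy, hyx⟩
    · exact absurd (Or.inl rfl) hyx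
    · exact hxy
  · intro hxy
    refine ⟨Or.inr hxy, ?_⟩
    rintro (rfl | hyx)
    · exact (gap _ _ hxy).false
    · exact ((gap x y hxy).trans (gap y x hyx)).false

theorem isPartialOrderRel_marginLe (hδ : 0 < δ) : IsPartialOrderRel (marginLe f δ) := by
  refine ⟨fun _ => Or.inl rfl, ?_, ?_⟩
  · rintro x y z (rfl | hxy) (rfl | hyz)
    exacts [Or.inl rfl, Or.inr hyz, Or.inr hxy,
      Or.inr (hxy.trans ((le_add_of_nonneg_right hδ.le).trans hyz))]
  · rintro x y (rfl | hxy) hyx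
    · rfl
    · exact absurd hyx ((lt_marginLe_iff hδ).2 hxy).2

theorem marginLe_mul_mul {G : Type*} [Monoid G] (φ : G →* Multiplicative α) (a b x y : G)
    (h : marginLe (fun g => (φ g).toAdd) δ x y) :
    marginLe (fun g => (φ g).toAdd) δ (a * x * b) (a * y * b) := by
  rcases h with rfl | hxy
  · exact Or.inl rfl
  · right
    simp only [map_mul, toAdd_mul]
    calc (φ a).toAdd + (φ x).toAdd + (φ b).toAdd + δ
        = (φ a).toAdd + ((φ x).toAdd + δ) + (φ b).toAdd := by ac_rfl
      _ ≤ (φ a).toAdd + (φ y).toAdd + (φ b).toAdd := by gcongr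

theorem not_embeds2p2_marginLe (hδ : 0 < δ) : ¬ Embeds2p2 (marginLe f δ) := by
  simp only [Embeds2p2, lt_marginLe_iff hδ, incomp_marginLe_iff]
  rintro ⟨a, b, c, d, hab, hcd, -, ⟨-, hda, -⟩, ⟨-, -, hbc⟩, -⟩
  exact (((hbc.trans_le hcd).trans hda).trans_le hab).false

theorem not_embeds3p1_marginLe (hδ : 0 < δ) : ¬ Embeds3p1 (marginLe f δ) := by
  simp only [Embeds3p1, lt_marginLe_iff hδ, incomp_marginLe_iff]
  rintro ⟨a, b, c, d, hab, hbc, ⟨-, -, hda⟩, -, ⟨-, hcd, -⟩⟩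
  have hbd : f b < f d := lt_of_add_lt_add_right (hbc.trans_lt hcd)
  exact ((hbd.trans hda).trans_le hab).false

theorem embeds1p2_marginLe (hδ : 0 < δ) {a b c : X} (hab : f a + δ ≤ f b)
    (hbc : f b < f c + δ) (hca : f c < f a + δ) : Embeds1p2 (marginLe f δ) := by
  have hac : f a < f c := lt_of_add_lt_add_right (hab.trans_lt hbc)
  have hcb : f c < f b := hca.trans_le hab
  refine ⟨a, b, c, (lt_marginLe_iff hδ).2 hab, incomp_marginLe_iff.2 ⟨?_, ?_, hca⟩,
    incomp_marginLe_iff.2 ⟨?_, hbc, ?_⟩⟩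
  · rintro rfl; exact hac.false
  · exact hac.trans (lt_add_of_pos_right _ hδ)
  · rintro rfl; exact hcb.false
  · exact hcb.trans (lt_add_of_pos_right _ hδ)

end MarginLe

theorem freeGroup_has_semiorder_not_weakOrder_general (S : Type*) [Nonempty S] :
    ∃ le : FreeGroup S → FreeGroup S → Prop,
      IsPartialOrderRel le ∧
      (∀ a b x y : FreeGroup S, le x y → le (a * x * b) (a * y * b)) ∧
      ¬ Embeds2p2 le ∧ ¬ Embeds3p1 le ∧ Embeds1p2 le := by
  obtain ⟨s⟩ := ‹Nonempty S›
  let exponentSum : FreeGroup S →* Multiplicative ℤ :=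
    FreeGroup.lift fun _ => Multiplicative.ofAdd 1
  have h_of : (exponentSum (FreeGroup.of s)).toAdd = 1 := by simp [exponentSum]
  refine ⟨marginLe (fun g => (exponentSum g).toAdd) 2, isPartialOrderRel_marginLe two_pos,
    marginLe_mul_mul exponentSum, not_embeds2p2_marginLe two_pos, not_embeds3p1_marginLe two_pos,
    embeds1p2_marginLe (a := 1) (b := FreeGroup.of s ^ 2) (c := FreeGroup.of s) two_pos ?_ ?_ ?_⟩ <;>
  simp [h_of]

/-- The free group on a nonempty finite set can be equipped with a
compatible partial order which is a semiorder but not a weak order. -/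
theorem freeGroup_has_semiorder_not_weakOrder (S : Type*) [Fintype S] [Nonempty S] :
    ∃ le : FreeGroup S → FreeGroup S → Prop,
      IsPartialOrderRel le ∧
      (∀ a b x y : FreeGroup S, le x y → le (a * x * b) (a * y * b)) ∧
      ¬ Embeds2p2 le ∧ ¬ Embeds3p1 le ∧ Embeds1p2 le :=
  freeGroup_has_semiorder_not_weakOrder_general S

end ThrPaper
end

section
/- Let G = (X, +, ≤) be an ordered group, let inc(0) be the set of elements incomparable to 0, and let I(G)(0) be the connected component of 0 in the incomparability graph of (X, ≤). Then I(G)(0) is the least subgroup of G containing inc(0) ∪ {0}; it is a normal subgroup of G and a convex subset of (X, ≤); the quotient group G/I(G)(0) carries a compatible total order (x + I(G)(0) < y + I(G)(0) iff x < y for representatives in distinct cosets); and the order on G is the lexicographical sum of the cosets of I(G)(0) indexed by this chain: for x, y in distinct cosets, x < y iff x + I(G)(0) < y + I(G)(0). -/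
/-!
Everything except the subgroup structure is a fact about an arbitrary poset. If `z` lies above
some element of an incomparability component `C` but outside `C`, then `z` is comparable with
every element of `C`, and a path of incomparabilities starting below `z` can never climb above
`z`; so `z` lies strictly above all of `C`. Hence components are convex, elements of distinct
components are comparable, and the order between them does not depend on the representatives:
the order is the lexicographic sum of its components. Compatibility with the group operation
makes the incomparability relation translation invariant, so the component of `x` is the coset
`x + I`, where `I` is the component of `0`; this is what makes `I` a normal subgroup, generated
by the elements incomparable to `0`.
-/

namespace ThrPaper

universe u

variable {X : Type*}

open Relation

section Poset

variable {le : X → X → Prop}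

instance : Std.Symm (Incomp le) := ⟨fun _ _ h => ⟨h.2, h.1⟩⟩

lemma incomp_flip : Incomp (fun x y => le y x) = Incomp le :=
  funext₂ fun _ _ => propext and_comm

lemma le_of_reflTransGen_incomp (htrans : ∀ x y z, le x y → le y z → le x z) {x z t : X}
    (hxz : le x z) (hz : ¬ ReflTransGen (Incomp le) x z) (ht : ReflTransGen (Incomp le) x t) :
    le t z := by
  induction ht with
  | refl => exact hxz
  | @tail b c hxb hbc hbz =>
    by_contra hcz
    exact hz <| hxb.tail hbc |>.tail ⟨hcz, fun hzc => hbc.1 (htrans _ _ _ hbz hzc)⟩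

lemma lt_of_reflTransGen_incomp (htrans : ∀ x y z, le x y → le y z → le x z)
    (hanti : ∀ x y, le x y → le y x → x = y) {x z t : X}
    (hxz : le x z) (hz : ¬ ReflTransGen (Incomp le) x z) (ht : ReflTransGen (Incomp le) x t) :
    Lt le t z :=
  have htz := le_of_reflTransGen_incomp htrans hxz hz ht
  ⟨htz, fun hzt => hz (hanti _ _ htz hzt ▸ ht)⟩

lemma lt_of_reflTransGen_incomp' (htrans : ∀ x y z, le x y → le y z → le x z)
    (hanti : ∀ x y, le x y → le y x → x = y) {x z t : X}
    (hzx : le z x) (hz : ¬ ReflTransGen (Incomp le) x z) (ht : ReflTransGen (Incomp le) x t) :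
    Lt le z t :=
  lt_of_reflTransGen_incomp (le := fun a b => le b a) (fun _ _ _ hab hbc => htrans _ _ _ hbc hab)
    (fun _ _ hab hba => hanti _ _ hba hab) hzx (by rwa [incomp_flip]) (by rwa [incomp_flip])

lemma lt_of_lt_of_reflTransGen_incomp (htrans : ∀ x y z, le x y → le y z → le x z)
    (hanti : ∀ x y, le x y → le y x → x = y) {x x' y y' : X}
    (hx : ReflTransGen (Incomp le) x x') (hy : ReflTransGen (Incomp le) y y')
    (hxy : ¬ ReflTransGen (Incomp le) x y) (h : Lt le x y) : Lt le x' y' :=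
  have hx'y : Lt le x' y := lt_of_reflTransGen_incomp htrans hanti h.1 hxy hx
  lt_of_reflTransGen_incomp' htrans hanti hx'y.1 (fun hyx' => hxy (hx.trans (symm hyx'))) hy

lemma lt_iff_lt_of_reflTransGen_incomp (htrans : ∀ x y z, le x y → le y z → le x z)
    (hanti : ∀ x y, le x y → le y x → x = y) {x x' y y' : X}
    (hx : ReflTransGen (Incomp le) x x') (hy : ReflTransGen (Incomp le) y y')
    (hxy : ¬ ReflTransGen (Incomp le) x y) : Lt le x y ↔ Lt le x' y' :=
  ⟨lt_of_lt_of_reflTransGen_incomp htrans hanti hx hy hxy,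
    lt_of_lt_of_reflTransGen_incomp htrans hanti (symm hx) (symm hy)
      fun hx'y' => hxy (hx.trans (hx'y'.trans (symm hy)))⟩

lemma lt_or_lt_of_not_reflTransGen_incomp (hanti : ∀ x y, le x y → le y x → x = y) {x y : X}
    (hxy : ¬ ReflTransGen (Incomp le) x y) : Lt le x y ∨ Lt le y x := by
  have hne : x ≠ y := by rintro rfl; exact hxy .refl
  by_cases hle : le x y
  · exact .inl ⟨hle, fun hyx => hne (hanti _ _ hle hyx)⟩
  · by_cases hge : le y x
    · exact .inr ⟨hge, hle⟩
    · exact absurd (.single ⟨hle, hge⟩) hxy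

lemma reflTransGen_incomp_of_le_of_le (htrans : ∀ x y z, le x y → le y z → le x z)
    (hanti : ∀ x y, le x y → le y x → x = y) {a x y z : X}
    (hx : ReflTransGen (Incomp le) a x) (hy : ReflTransGen (Incomp le) a y)
    (hxz : le x z) (hzy : le z y) : ReflTransGen (Incomp le) a z := by
  by_contra hz
  have hyz := le_of_reflTransGen_incomp htrans hxz (fun h => hz (hx.trans h)) ((symm hx).trans hy)
  exact hz (hanti _ _ hyz hzy ▸ hy)

end Poset

section Group

variable {G : Type*} [AddGroup G] {le : G → G → Prop}

lemma IsCompat.le_iff (hc : IsCompat le) (a b x y : G) :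
    le (a + x + b) (a + y + b) ↔ le x y :=
  ⟨fun h => by simpa [add_assoc] using hc (-a) (-b) _ _ h, hc a b x y⟩

lemma IsCompat.incomp_iff (hc : IsCompat le) (a b x y : G) :
    Incomp le (a + x + b) (a + y + b) ↔ Incomp le x y := by
  simp only [Incomp, hc.le_iff]

lemma IsCompat.lt_iff (hc : IsCompat le) (a b x y : G) :
    Lt le (a + x + b) (a + y + b) ↔ Lt le x y := by
  simp only [Lt, hc.le_iff]

lemma IsCompat.reflTransGen_incomp (hc : IsCompat le) (a b : G) {x y : G}
    (h : ReflTransGen (Incomp le) x y) : ReflTransGen (Incomp le) (a + x + b) (a + y + b) :=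
  ReflTransGen.lift (fun z => a + z + b) (fun _ _ h => (hc.incomp_iff a b _ _).2 h) _ _ h

lemma IsCompat.reflTransGen_incomp_iff (hc : IsCompat le) {x y : G} :
    ReflTransGen (Incomp le) x y ↔ ReflTransGen (Incomp le) 0 (-x + y) :=
  ⟨fun h => by simpa using hc.reflTransGen_incomp (-x) 0 h,
    fun h => by simpa using hc.reflTransGen_incomp x 0 h⟩

def IsCompat.incompComponent (hc : IsCompat le) : AddSubgroup G where
  carrier := {x | ReflTransGen (Incomp le) 0 x}
  zero_mem' := .refl
  add_mem' {x _} hx hy := hx.trans (hc.reflTransGen_incomp_iff.2 (by simpa using hy))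
  neg_mem' {x} hx := by simpa using hc.reflTransGen_incomp_iff.1 (symm hx)

lemma IsCompat.neg_add_mem_incompComponent (hc : IsCompat le) {x y : G} :
    -x + y ∈ hc.incompComponent ↔ ReflTransGen (Incomp le) x y :=
  hc.reflTransGen_incomp_iff.symm

lemma IsCompat.incompComponent_normal (hc : IsCompat le) : hc.incompComponent.Normal :=
  ⟨fun _ hn g => show ReflTransGen _ _ _ by simpa using hc.reflTransGen_incomp g (-g) hn⟩

lemma IsCompat.incompComponent_eq_closure (hc : IsCompat le) :
    hc.incompComponent = AddSubgroup.closure {x | Incomp le x 0} := by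
  refine le_antisymm (fun x hx => ?_)
    (AddSubgroup.closure_le _ |>.2 fun _ (hx : Incomp le _ 0) => .single (symm hx))
  induction hx with
  | refl => exact zero_mem _
  | @tail b c _ hbc hb =>
    have hbc' := (hc.incomp_iff (-b) 0 b c).2 hbc
    rw [neg_add_cancel, add_zero, add_zero] at hbc'
    simpa using add_mem hb (AddSubgroup.subset_closure (symm hbc' : Incomp le _ 0))

end Group

/-- Properties of `I(G)(0)`, the connected component of `0` in the
incomparability graph of an ordered group `G`. -/
theorem component_of_zero_props {G : Type*} [AddGroup G] (le : G → G → Prop)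
    (hpo : IsPartialOrderRel le) (hc : IsCompat le)
    (Icmp : Set G)
    (hIcmp : Icmp = {x : G | Relation.ReflTransGen (fun a b => Incomp le a b) 0 x}) :
    -- `I(G)(0)` is a subgroup of `G`
    ((0 : G) ∈ Icmp ∧ (∀ x ∈ Icmp, -x ∈ Icmp) ∧ ∀ x ∈ Icmp, ∀ y ∈ Icmp, x + y ∈ Icmp) ∧
    -- it contains `inc(0) ∪ {0}`
    (∀ x : G, Incomp le x 0 → x ∈ Icmp) ∧
    -- it is the least subgroup containing `inc(0) ∪ {0}`
    (∀ K : Set G,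
      ((0 : G) ∈ K ∧ (∀ x ∈ K, -x ∈ K) ∧ ∀ x ∈ K, ∀ y ∈ K, x + y ∈ K) →
      (∀ x : G, Incomp le x 0 → x ∈ K) → Icmp ⊆ K) ∧
    -- it is a normal subgroup
    (∀ x ∈ Icmp, ∀ g : G, -g + x + g ∈ Icmp) ∧
    -- it is a convex subset of `(G, ≤)`
    (∀ x y z : G, x ∈ Icmp → y ∈ Icmp → le x z → le z y → z ∈ Icmp) ∧
    -- distinct cosets are comparable: the quotient order is total
    (∀ x y : G, -x + y ∉ Icmp → (Lt le x y ∨ Lt le y x)) ∧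
    -- the quotient order is well defined, and the order on `G` is the lexicographical
    -- sum of the cosets: for `x, y` in distinct cosets, `x < y` iff `x + I < y + I`
    (∀ x x' y y' : G, -x + x' ∈ Icmp → -y + y' ∈ Icmp → -x + y ∉ Icmp →
      (Lt le x y ↔ Lt le x' y')) ∧
    -- the quotient order is compatible with the group operation
    (∀ a b x y : G, -x + y ∉ Icmp → Lt le x y → Lt le (a + x + b) (a + y + b)) := by
  obtain ⟨-, htrans, hanti⟩ := hpo
  replace hIcmp : Icmp = hc.incompComponent := hIcmp
  subst hIcmp
  have hI : ∀ {x y : G}, -x + y ∈ hc.incompComponent ↔ ReflTransGen (Incomp le) x y :=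
    hc.neg_add_mem_incompComponent
  refine ⟨⟨zero_mem hc.incompComponent, fun _ => neg_mem, fun _ hx _ => add_mem hx⟩,
    fun x hx => ?_, fun K ⟨hK0, hKneg, hKadd⟩ hK => ?_, fun x hx g => ?_,
    fun _ _ _ => reflTransGen_incomp_of_le_of_le htrans hanti,
    fun _ _ hxy => lt_or_lt_of_not_reflTransGen_incomp hanti (mt hI.2 hxy),
    fun _ _ _ _ hx hy hxy =>
      lt_iff_lt_of_reflTransGen_incomp htrans hanti (hI.1 hx) (hI.1 hy) (mt hI.2 hxy),
    fun a b x y _ => (hc.lt_iff a b x y).2⟩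
  · rw [hc.incompComponent_eq_closure]
    exact AddSubgroup.subset_closure hx
  · let H : AddSubgroup G := ⟨⟨⟨K, fun hx => hKadd _ hx _⟩, hK0⟩, fun hx => hKneg _ hx⟩
    exact hc.incompComponent_eq_closure.le.trans ((AddSubgroup.closure_le H).2 hK)
  · simpa using hc.incompComponent_normal.conj_mem x hx (-g)

end ThrPaper
end
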